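/- For each d ≥ 4 set ℓ_d = √d and let σ_d be the unique positive solution of 1/(2σ²) = log( √2 d² σ/√π ) (which satisfies σ_d ≥ K/log(d) for some constant K > 0). Then, with ρ_d(x) = (2σ_d^d/(2π)^{d/2}) e^{−σ_d²‖x‖²/2} sin(ℓ_d x₁), there exist c > 0 and d0 such that for all d ≥ d0, sup_{(θ,b) ∈ S^{d−1}×ℝ} | ∫_{ℝ^d} ρ_d(x) ReLU(⟨θ,x⟩ − b) dx | ≥ c/(d log d), i.e. d_{F_{2L}}(μ_d,ν_d) = Ω(1/(d log d)). -/

import Mathlib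

open MeasureTheory

noncomputable section

/-- `ReLU(t) = max(t, 0)`. -/
def relu (t : ℝ) : ℝ := max t 0

/-- The oscillating Gaussian density difference
`ρ_d(x) = (2σ^d/(2π)^{d/2}) e^{−σ²‖x‖²/2} sin(ℓ x₁)`. -/
def rhoSin (d : ℕ) (hd : 0 < d) (σ ℓ : ℝ) (x : EuclideanSpace ℝ (Fin d)) : ℝ :=
  (2 * σ ^ d / (2 * Real.pi) ^ ((d : ℝ) / 2)) *
    Real.exp (-σ ^ 2 * ‖x‖ ^ 2 / 2) * Real.sin (ℓ * x ⟨0, hd⟩)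

/-!
Take `θ = e₁`. The density `ρ_d` is a product of one-dimensional Gaussians times
`sin(ℓ x₁)`, so the integral against `ReLU(x₁ - b)` collapses to `2σ/√(2π) · J(b)` with
`J(b) = ∫ e^{-σ²t²/2} sin(ℓt) ReLU(t - b) dt` (`sinRidge`). For `h = π/(2ℓ)` the second
difference `J(0) - 2J(h) + J(2h)` integrates the Gaussian-weighted `sin(ℓt)` against the hat
function supported on `[0, 2h]`, where `sin(ℓt) ≥ 0`; it is therefore at least `h²/16`, so one
of the three values `|J(b)|` is at least `h²/64 ≍ 1/d`. The defining equation of `σ_d` forces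
`1/(2 log d) ≤ σ_d ≤ 1`, which gives the rate `1/(d log d)`.
-/

open Real

lemma relu_nonneg (t : ℝ) : 0 ≤ relu t := le_max_right _ _

lemma relu_of_nonpos {t : ℝ} (h : t ≤ 0) : relu t = 0 := max_eq_right h

lemma relu_of_nonneg {t : ℝ} (h : 0 ≤ t) : relu t = t := max_eq_left h

@[fun_prop]
lemma continuous_relu : Continuous relu := continuous_id.max continuous_const

lemma relu_sub_le_abs_add_abs (t β : ℝ) : relu (t - β) ≤ |t| + |β| :=
  max_le ((le_abs_self _).trans (abs_sub _ _)) (by positivity)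

def hat (h t : ℝ) : ℝ := relu t - 2 * relu (t - h) + relu (t - 2 * h)

lemma hat_nonneg {h : ℝ} (hh : 0 ≤ h) (t : ℝ) : 0 ≤ hat h t := by
  unfold hat
  rcases le_total t 0 with ht | ht
  · rw [relu_of_nonpos ht, relu_of_nonpos (by linarith), relu_of_nonpos (by linarith)]; norm_num
  rcases le_total t h with hth | hth
  · rw [relu_of_nonneg ht, relu_of_nonpos (by linarith), relu_of_nonpos (by linarith)]; linarith
  rcases le_total t (2 * h) with ht2 | ht2
  · rw [relu_of_nonneg ht, relu_of_nonneg (by linarith), relu_of_nonpos (by linarith)]; linarith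
  · rw [relu_of_nonneg ht, relu_of_nonneg (by linarith), relu_of_nonneg (by linarith)]; linarith

lemma hat_of_mem_Icc {h t : ℝ} (ht : t ∈ Set.Icc 0 h) : hat h t = t := by
  unfold hat
  rw [relu_of_nonneg ht.1, relu_of_nonpos (by linarith [ht.2]),
    relu_of_nonpos (by linarith [ht.1, ht.2])]
  ring

lemma hat_eq_zero_of_notMem_Icc {h t : ℝ} (hh : 0 ≤ h) (ht : t ∉ Set.Icc 0 (2 * h)) :
    hat h t = 0 := by
  unfold hat
  rcases not_and_or.mp ht with ht | ht <;> push Not at ht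
  · rw [relu_of_nonpos ht.le, relu_of_nonpos (by linarith), relu_of_nonpos (by linarith)]; ring
  · rw [relu_of_nonneg (by linarith), relu_of_nonneg (by linarith), relu_of_nonneg (by linarith)]
    ring

def sinRidge (σ ℓ β : ℝ) : ℝ :=
  ∫ t : ℝ, exp (-σ ^ 2 * t ^ 2 / 2) * sin (ℓ * t) * relu (t - β)

section sinRidge

variable {σ : ℝ} (ℓ : ℝ)

lemma integrable_gaussian_mul_sin_mul_relu (hσ : σ ≠ 0) (β : ℝ) :
    Integrable fun t : ℝ => exp (-σ ^ 2 * t ^ 2 / 2) * sin (ℓ * t) * relu (t - β) := by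
  have ha : 0 < σ ^ 2 / 2 := by positivity
  have hdom : Integrable fun t : ℝ => (|t| + |β|) * exp (-(σ ^ 2 / 2) * t ^ 2) := by
    simp_rw [add_mul]
    refine Integrable.add ?_ ((integrable_exp_neg_mul_sq ha).const_mul _)
    simpa [abs_mul] using (integrable_rpow_mul_exp_neg_mul_sq ha (by norm_num : (-1 : ℝ) < 1)).abs
  refine hdom.mono' (by fun_prop : Continuous _).aestronglyMeasurable
    (Filter.Eventually.of_forall fun t => ?_)
  have hexp : exp (-σ ^ 2 * t ^ 2 / 2) = exp (-(σ ^ 2 / 2) * t ^ 2) := by ring_nf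
  rw [Real.norm_eq_abs, abs_mul, abs_mul, abs_of_pos (exp_pos _),
    abs_of_nonneg (relu_nonneg _), hexp]
  calc exp (-(σ ^ 2 / 2) * t ^ 2) * |sin (ℓ * t)| * relu (t - β)
      ≤ exp (-(σ ^ 2 / 2) * t ^ 2) * 1 * (|t| + |β|) := by
        gcongr
        · exact relu_nonneg _
        · exact abs_sin_le_one _
        · exact relu_sub_le_abs_add_abs t β
    _ = (|t| + |β|) * exp (-(σ ^ 2 / 2) * t ^ 2) := by ring

lemma sinRidge_second_difference (hσ : σ ≠ 0) (h : ℝ) :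
    sinRidge σ ℓ 0 - 2 * sinRidge σ ℓ h + sinRidge σ ℓ (2 * h) =
      ∫ t : ℝ, exp (-σ ^ 2 * t ^ 2 / 2) * sin (ℓ * t) * hat h t := by
  set F := fun β t : ℝ => exp (-σ ^ 2 * t ^ 2 / 2) * sin (ℓ * t) * relu (t - β)
  have hint : ∀ β, Integrable (F β) := integrable_gaussian_mul_sin_mul_relu ℓ hσ
  have hpt : ∀ t, exp (-σ ^ 2 * t ^ 2 / 2) * sin (ℓ * t) * hat h t =
      (F 0 t - 2 * F h t) + F (2 * h) t := fun t => by
    simp only [F, hat, sub_zero]; ring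
  have h2 : Integrable fun t => 2 * F h t := (hint h).const_mul 2
  rw [integral_congr_ae (ae_of_all _ hpt),
    integral_add (f := fun t => F 0 t - 2 * F h t) ((hint 0).sub h2) (hint _),
    integral_sub (hint 0) h2, integral_const_mul]
  rfl

end sinRidge

section hat

variable {σ ℓ h : ℝ}

lemma gaussian_mul_sin_mul_hat_nonneg (hh : 0 ≤ h) (hℓh : ℓ * h = π / 2) (t : ℝ) :
    0 ≤ exp (-σ ^ 2 * t ^ 2 / 2) * sin (ℓ * t) * hat h t := by
  by_cases ht : t ∈ Set.Icc 0 (2 * h)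
  · have hℓ : 0 ≤ ℓ := by by_contra! hℓ; nlinarith [pi_pos]
    have hsin : 0 ≤ sin (ℓ * t) :=
      sin_nonneg_of_nonneg_of_le_pi (mul_nonneg hℓ ht.1) (by nlinarith [ht.2])
    exact mul_nonneg (mul_nonneg (exp_pos _).le hsin) (hat_nonneg hh t)
  · rw [hat_eq_zero_of_notMem_Icc hh ht, mul_zero]

lemma le_gaussian_mul_sin_mul_hat (hσ : 0 ≤ σ) (hσh : σ * h ≤ 1) (hℓh : ℓ * h = π / 2)
    {t : ℝ} (ht : t ∈ Set.Icc (h / 2) h) :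
    h / 8 ≤ exp (-σ ^ 2 * t ^ 2 / 2) * sin (ℓ * t) * hat h t := by
  obtain ⟨ht1, ht2⟩ := ht
  have hh : 0 ≤ h := by linarith
  have ht0 : 0 ≤ t := by linarith
  have hexp : 1 / 2 ≤ exp (-σ ^ 2 * t ^ 2 / 2) := by
    have hσt : σ * t ≤ 1 := (mul_le_mul_of_nonneg_left ht2 hσ).trans hσh
    nlinarith [add_one_le_exp (-σ ^ 2 * t ^ 2 / 2), mul_nonneg hσ ht0]
  have hsin : 1 / 2 ≤ sin (ℓ * t) := by
    have hℓ : 0 ≤ ℓ := by by_contra! hℓ; nlinarith [pi_pos]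
    have h1 : π / 4 ≤ ℓ * t := by nlinarith
    have h2 : ℓ * t ≤ π / 2 := hℓh ▸ mul_le_mul_of_nonneg_left ht2 hℓ
    calc 1 / 2 = 2 / π * (π / 4) := by field_simp; ring
      _ ≤ 2 / π * (ℓ * t) := by gcongr
      _ ≤ sin (ℓ * t) := mul_le_sin (by positivity) h2
  rw [hat_of_mem_Icc ⟨ht0, ht2⟩]
  calc h / 8 = 1 / 2 * (1 / 2) * (h / 2) := by ring
    _ ≤ _ := by gcongr

lemma integrable_gaussian_mul_sin_mul_hat (hσ : σ ≠ 0) :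
    Integrable fun t : ℝ => exp (-σ ^ 2 * t ^ 2 / 2) * sin (ℓ * t) * hat h t := by
  have hint := integrable_gaussian_mul_sin_mul_relu ℓ hσ
  refine (((hint 0).sub ((hint h).const_mul 2)).add (hint (2 * h))).congr (ae_of_all _ fun t => ?_)
  simp only [Pi.add_apply, Pi.sub_apply, hat, sub_zero]
  ring

lemma sq_div_sixteen_le_integral_gaussian_mul_sin_mul_hat (hσ : 0 < σ) (hσh : σ * h ≤ 1)
    (hh : 0 ≤ h) (hℓh : ℓ * h = π / 2) :
    h ^ 2 / 16 ≤ ∫ t : ℝ, exp (-σ ^ 2 * t ^ 2 / 2) * sin (ℓ * t) * hat h t := by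
  have hint := integrable_gaussian_mul_sin_mul_hat (ℓ := ℓ) (h := h) hσ.ne'
  calc h ^ 2 / 16 = h / 8 * volume.real (Set.Icc (h / 2) h) := by
        rw [Real.volume_real_Icc_of_le (by linarith)]; ring
    _ ≤ ∫ t in Set.Icc (h / 2) h, exp (-σ ^ 2 * t ^ 2 / 2) * sin (ℓ * t) * hat h t :=
        setIntegral_ge_of_const_le_real measurableSet_Icc measure_Icc_lt_top.ne
          (fun t ht => le_gaussian_mul_sin_mul_hat hσ.le hσh hℓh ht) hint.integrableOn
    _ ≤ _ := setIntegral_le_integral hint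
        (ae_of_all _ (gaussian_mul_sin_mul_hat_nonneg hh hℓh))

end hat

lemma le_abs_or_le_abs_or_le_abs_of_le_sub_two_mul_add {a b c m : ℝ}
    (h : 4 * m ≤ a - 2 * b + c) : m ≤ |a| ∨ m ≤ |b| ∨ m ≤ |c| := by
  by_contra! H
  linarith [le_abs_self a, neg_abs_le b, le_abs_self c]

lemma exists_le_abs_sinRidge {σ ℓ : ℝ} (hσ : 0 < σ) (hσ1 : σ ≤ 1) (hℓ : 2 ≤ ℓ) :
    ∃ β, (π / (2 * ℓ)) ^ 2 / 64 ≤ |sinRidge σ ℓ β| := by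
  set h := π / (2 * ℓ)
  have hh : 0 ≤ h := by positivity
  have hℓh : ℓ * h = π / 2 := by simp only [h]; field_simp
  have hσh : σ * h ≤ 1 := by
    have : h ≤ 1 := by rw [div_le_one (by positivity)]; linarith [pi_le_four]
    nlinarith
  have key := sq_div_sixteen_le_integral_gaussian_mul_sin_mul_hat hσ hσh hh hℓh
  rw [← sinRidge_second_difference ℓ hσ.ne'] at key
  rcases le_abs_or_le_abs_or_le_abs_of_le_sub_two_mul_add (m := h ^ 2 / 64)
    (by linarith [key] : _ ≤ sinRidge σ ℓ 0 - 2 * sinRidge σ ℓ h + sinRidge σ ℓ (2 * h))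
    with h0 | h1 | h2
  exacts [⟨0, h0⟩, ⟨h, h1⟩, ⟨2 * h, h2⟩]

lemma integral_euclideanSpace_prod {ι : Type*} [Fintype ι] (f : ι → ℝ → ℝ) :
    ∫ x : EuclideanSpace ℝ ι, ∏ i, f i (x i) = ∏ i, ∫ t, f i t := by
  rw [← (PiLp.volume_preserving_toLp ι).integral_comp
    (MeasurableEquiv.toLp 2 (ι → ℝ)).measurableEmbedding]
  exact integral_fintype_prod_volume_eq_prod f

lemma exp_neg_mul_norm_sq_div_two_eq_prod {ι : Type*} [Fintype ι] (σ : ℝ)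
    (x : EuclideanSpace ℝ ι) :
    exp (-σ ^ 2 * ‖x‖ ^ 2 / 2) = ∏ i, exp (-σ ^ 2 * x i ^ 2 / 2) := by
  rw [EuclideanSpace.real_norm_sq_eq, ← exp_sum, Finset.mul_sum, Finset.sum_div]

lemma integral_exp_neg_mul_sq_div_two {σ : ℝ} (hσ : 0 < σ) :
    ∫ t : ℝ, exp (-σ ^ 2 * t ^ 2 / 2) = √(2 * π) / σ := by
  simp_rw [show ∀ t : ℝ, -σ ^ 2 * t ^ 2 / 2 = -(σ ^ 2 / 2) * t ^ 2 from fun t => by ring]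
  rw [integral_gaussian, show π / (σ ^ 2 / 2) = 2 * π / σ ^ 2 by field_simp,
    sqrt_div (by positivity), sqrt_sq hσ.le]

lemma prod_update_const_apply {ι α M : Type*} [Fintype ι] [DecidableEq ι] [CommMonoid M]
    (i₀ : ι) (g G : α → M) (y : ι → α) :
    ∏ i, Function.update (fun _ => g) i₀ G i (y i) =
      G (y i₀) * ∏ i ∈ Finset.univ.erase i₀, g (y i) := by
  rw [← Finset.mul_prod_erase _ _ (Finset.mem_univ i₀), Function.update_self]
  congr 1
  exact Finset.prod_congr rfl fun i hi => by rw [Function.update_of_ne (Finset.ne_of_mem_erase hi)]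

lemma integral_rhoSin_mul_comp_coord (d : ℕ) (hd : 0 < d) {σ : ℝ} (hσ : 0 < σ) (ℓ : ℝ)
    (f : ℝ → ℝ) :
    ∫ x : EuclideanSpace ℝ (Fin d), rhoSin d hd σ ℓ x * f (x ⟨0, hd⟩) =
      2 * σ / √(2 * π) * ∫ t : ℝ, exp (-σ ^ 2 * t ^ 2 / 2) * sin (ℓ * t) * f t := by
  set i₀ : Fin d := ⟨0, hd⟩
  set C := 2 * σ ^ d / (2 * π) ^ ((d : ℝ) / 2)
  set g : ℝ → ℝ := fun t => exp (-σ ^ 2 * t ^ 2 / 2)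
  set G : ℝ → ℝ := fun t => C * (g t * sin (ℓ * t) * f t)
  have hprod : ∀ x : EuclideanSpace ℝ (Fin d),
      rhoSin d hd σ ℓ x * f (x i₀) = ∏ i, Function.update (fun _ => g) i₀ G i (x i) := by
    intro x
    rw [prod_update_const_apply, rhoSin, exp_neg_mul_norm_sq_div_two_eq_prod,
      ← Finset.mul_prod_erase _ _ (Finset.mem_univ i₀)]
    ring
  have hC : C * (√(2 * π) / σ) ^ (d - 1) = 2 * σ / √(2 * π) := by
    obtain ⟨n, rfl⟩ := Nat.exists_eq_add_one_of_ne_zero hd.ne'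
    have : 0 < √(2 * π) := by positivity
    simp only [C, rpow_div_two_eq_sqrt _ (by positivity : (0 : ℝ) ≤ 2 * π), Nat.add_sub_cancel,
      rpow_natCast, div_pow]
    field_simp
    ring
  simp_rw [hprod]
  rw [integral_euclideanSpace_prod]
  simp_rw [Function.apply_update (fun _ (φ : ℝ → ℝ) => ∫ t, φ t)]
  rw [Finset.prod_update_of_mem (Finset.mem_univ i₀), Finset.prod_const,
    Finset.card_univ_sdiff, Finset.card_singleton, Fintype.card_fin,
    integral_exp_neg_mul_sq_div_two hσ, integral_const_mul, ← hC]
  ring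

section sigma

variable {x s : ℝ}

lemma one_le_log_of_three_le (hx : 3 ≤ x) : 1 ≤ log x := by
  rw [le_log_iff_exp_le (by linarith)]
  linarith [exp_one_lt_three]

lemma le_one_of_inv_two_mul_sq_eq_log (hx : 3 ≤ x) (hs : 0 < s)
    (hE : 1 / (2 * s ^ 2) = log (√2 * x ^ 2 * s / √π)) : s ≤ 1 := by
  by_contra! hs1
  have hsqrt2 : 1 ≤ √2 := one_le_sqrt.mpr (by norm_num)
  have hsqrtπ : √π ≤ 2 := sqrt_le_iff.mpr ⟨by norm_num, by linarith [pi_le_four]⟩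
  have harg : exp 1 ≤ √2 * x ^ 2 * s / √π := by
    rw [le_div_iff₀ (by positivity)]
    calc exp 1 * √π ≤ 3 * 2 :=
          mul_le_mul exp_one_lt_three.le hsqrtπ (by positivity) (by norm_num)
      _ ≤ 1 * x ^ 2 * 1 := by nlinarith
      _ ≤ √2 * x ^ 2 * s := by gcongr
  have hlog : 1 ≤ log (√2 * x ^ 2 * s / √π) := (le_log_iff_exp_le (by positivity)).mpr harg
  have : 1 / (2 * s ^ 2) < 1 := by
    rw [div_lt_one (by positivity)]; nlinarith
  linarith

lemma inv_two_mul_log_le_of_inv_two_mul_sq_eq_log (hx : 3 ≤ x) (hs : 0 < s)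
    (hE : 1 / (2 * s ^ 2) = log (√2 * x ^ 2 * s / √π)) : 1 / (2 * log x) ≤ s := by
  have hL := one_le_log_of_three_le hx
  have harg : √2 * x ^ 2 * s / √π ≤ x ^ 2 := by
    have : √2 * s ≤ √π := by
      nlinarith [le_one_of_inv_two_mul_sq_eq_log hx hs hE, sqrt_le_sqrt two_le_pi, sqrt_nonneg 2]
    rw [div_le_iff₀ (by positivity)]
    nlinarith [sq_nonneg x]
  have hlog : 1 / (2 * s ^ 2) ≤ 2 * log x := by
    rw [hE, show 2 * log x = log (x ^ 2) by rw [log_pow]; norm_num]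
    exact log_le_log (by positivity) harg
  rw [div_le_iff₀ (by positivity)] at hlog ⊢
  nlinarith [mul_pos hs (by linarith : 0 < log x)]

end sigma

/-- Lower bound for two-layer discriminators: with `ℓ_d = √d` and `σ_d` solving
`1/(2σ²) = log(√2 d² σ/√π)`, the two-layer IPM is `Ω(1/(d log d))`. -/
theorem lower_bound_2l (σ : ℕ → ℝ)
    (hσ : ∀ d : ℕ, 4 ≤ d → 0 < σ d ∧
      1 / (2 * (σ d) ^ 2) =
        Real.log (Real.sqrt 2 * (d : ℝ) ^ 2 * σ d / Real.sqrt Real.pi)) :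
    (∃ K : ℝ, 0 < K ∧ ∀ d : ℕ, 4 ≤ d → K / Real.log d ≤ σ d) ∧
    ∃ c : ℝ, 0 < c ∧ ∃ d0 : ℕ, ∀ (d : ℕ) (hd : 0 < d), 4 ≤ d → d0 ≤ d →
      ∃ (θ : EuclideanSpace ℝ (Fin d)) (b : ℝ), ‖θ‖ = 1 ∧
        c / ((d : ℝ) * Real.log d) ≤
          |∫ x : EuclideanSpace ℝ (Fin d),
            rhoSin d hd (σ d) (Real.sqrt d) x * relu ((inner ℝ θ x : ℝ) - b)| := by
  have three_le : ∀ d : ℕ, 4 ≤ d → (3 : ℝ) ≤ d := fun d hd4 => by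
    have : (4 : ℝ) ≤ d := by exact_mod_cast hd4
    linarith
  have hσ_lower : ∀ d : ℕ, 4 ≤ d → 1 / (2 * log d) ≤ σ d := fun d hd4 =>
    inv_two_mul_log_le_of_inv_two_mul_sq_eq_log (three_le d hd4) (hσ d hd4).1 (hσ d hd4).2
  refine ⟨⟨1 / 2, by norm_num, fun d hd4 => by rw [div_div]; exact hσ_lower d hd4⟩,
    1 / 100, by norm_num, 0, fun d hd hd4 _ => ?_⟩
  obtain ⟨hs, hE⟩ := hσ d hd4
  have h3 := three_le d hd4
  have hlog_pos : 0 < log (d : ℝ) := by linarith [one_le_log_of_three_le h3]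
  have hℓ : 2 ≤ √(d : ℝ) := le_sqrt_of_sq_le (by norm_num; exact_mod_cast hd4)
  obtain ⟨β, hβ⟩ := exists_le_abs_sinRidge hs (le_one_of_inv_two_mul_sq_eq_log h3 hs hE) hℓ
  refine ⟨EuclideanSpace.single ⟨0, hd⟩ 1, β, by simp, ?_⟩
  simp_rw [EuclideanSpace.inner_single_left, map_one, one_mul]
  rw [integral_rhoSin_mul_comp_coord d hd hs _ (fun t => relu (t - β)), abs_mul,
    abs_of_pos (by positivity)]
  have hsqrt : √(2 * π) ≤ π := sqrt_le_iff.mpr ⟨pi_pos.le, by nlinarith [two_le_pi]⟩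
  have hσL : 1 ≤ 2 * log d * σ d := (div_le_iff₀' (by positivity)).mp (hσ_lower d hd4)
  calc 1 / 100 / (d * log d) ≤ 2 * σ d / π * (π ^ 2 / (2 ^ 2 * d) / 64) := by
        rw [show 2 * σ d / π * (π ^ 2 / (2 ^ 2 * d) / 64) = σ d * π / (128 * d) by
          field_simp; ring, div_le_div_iff₀ (by positivity) (by positivity)]
        nlinarith [pi_gt_three, mul_le_mul_of_nonneg_left hσL pi_pos.le]
    _ ≤ 2 * σ d / √(2 * π) * ((π / (2 * √(d : ℝ))) ^ 2 / 64) := by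
        rw [div_pow, mul_pow, sq_sqrt (by linarith)]
        gcongr
    _ ≤ _ := by gcongr; exact hβ

end
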